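/- Let γ ∈ ℕ and set K_γ = 2·ω_γ·√(2/(3·C_{γγγγ})). Define the rescaled one-mode data ξ by ξ^m = K_γ if m = γ and ξ^m = 0 otherwise. Then ξ is a zero of the resonant operator of the spherically symmetric conformal cubic wave equation: for every m ∈ ℕ, ω_m²·ξ^m − K_γ³·C_{γγγm}·(1/(2π))·∫_0^{2π} cos³(ω_γ·t)·cos(ω_m·t) dt = 0. -/

import Mathlib

/-!
With `ω_n = n + 1`, the time average of `cos³(ω_γ t) cos(ω_m t)` is `3/8` for `m = γ`, `1/8` for
`m = 3γ + 2` and `0` otherwise. For `m = γ` the constant is chosen so that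
`K_γ² C_γγγγ · 3/8 = ω_γ²`, and the two terms cancel (if `C_γγγγ ≤ 0` the square root is the junk
value `0`, so `K_γ = 0` and both terms vanish). For `m = 3γ + 2` the coefficient `C_γγγm` vanishes:
by the linearization `U_{b+d} U_b = ∑_{t ≤ b} U_{d+2t}`, `U_γ²` and `U_γ U_{3γ+2}` expand into
`U_k` with `k ≤ 2γ` and `k ≥ 2γ + 2` respectively, and after `y = cos θ` distinct `U_k` become
orthogonal sines.
-/

open MeasureTheory

noncomputable def chebU : ℕ → ℝ → ℝ
  | 0, _ => 1
  | 1, y => 2 * y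
  | n + 2, y => 2 * y * chebU (n + 1) y - chebU n y

noncomputable def Ccoef (i j k m : ℕ) : ℝ :=
  (2 / Real.pi) *
    ∫ y in (-1:ℝ)..1, chebU i y * chebU j y * chebU k y * chebU m y * Real.sqrt (1 - y ^ 2)

noncomputable def Kcw (γ : ℕ) : ℝ := 2 * ((γ:ℝ) + 1) * Real.sqrt (2 / (3 * Ccoef γ γ γ γ))

open Real intervalIntegral Polynomial.Chebyshev

theorem chebU_eq_eval_U : ∀ (n : ℕ) (y : ℝ), chebU n y = (U ℝ n).eval y
  | 0, y => by simp [chebU]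
  | 1, y => by simp [chebU]
  | n + 2, y => by
    rw [chebU, chebU_eq_eval_U (n + 1), chebU_eq_eval_U n]
    push_cast
    simp [U_add_two]

theorem continuous_chebU (n : ℕ) : Continuous (chebU n) := by
  simp only [funext (chebU_eq_eval_U n), Polynomial.continuous]

theorem chebU_cos_mul_sin (n : ℕ) (θ : ℝ) :
    chebU n (cos θ) * sin θ = sin ((n + 1) * θ) := by
  simp [chebU_eq_eval_U]

theorem chebU_add_mul_chebU : ∀ (b d : ℕ) (y : ℝ),
    chebU (b + d) y * chebU b y = ∑ t ∈ Finset.range (b + 1), chebU (d + 2 * t) y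
  | 0, d, y => by simp [chebU]
  | 1, d, y => by
    simp only [Finset.sum_range_succ, Finset.sum_range_zero, add_comm 1 d, mul_zero, add_zero,
      chebU]
    ring
  | b + 2, d, y => by
    have step (t : ℕ) : 2 * y * chebU (d + 1 + 2 * t) y
        = chebU (d + 2 + 2 * t) y + chebU (d + 2 * t) y := by
      rw [show d + 1 + 2 * t = d + 2 * t + 1 by ring, show d + 2 + 2 * t = d + 2 * t + 2 by ring,
        chebU]
      ring
    calc chebU (b + 2 + d) y * chebU (b + 2) y
        = 2 * y * (chebU (b + 1 + (d + 1)) y * chebU (b + 1) y)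
          - chebU (b + (d + 2)) y * chebU b y := by
          rw [show b + 1 + (d + 1) = b + 2 + d by ring, show b + (d + 2) = b + 2 + d by ring,
            chebU]
          ring
      _ = _ := by
          rw [chebU_add_mul_chebU (b + 1) (d + 1), chebU_add_mul_chebU b (d + 2), Finset.mul_sum]
          simp only [step, Finset.sum_add_distrib]
          rw [Finset.sum_range_succ (fun t => chebU (d + 2 + 2 * t) y),
            Finset.sum_range_succ (fun t => chebU (d + 2 * t) y) (b + 2),
            show d + 2 + 2 * (b + 1) = d + 2 * (b + 2) by ring]
          ring

theorem chebU_mul_chebU (i j : ℕ) (y : ℝ) :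
    chebU i y * chebU j y
      = ∑ s ∈ Finset.range (min i j + 1), chebU (max i j - min i j + 2 * s) y := by
  rcases le_total i j with h | h
  · rw [min_eq_left h, max_eq_right h, mul_comm, ← chebU_add_mul_chebU, Nat.add_sub_cancel' h]
  · rw [min_eq_right h, max_eq_left h, ← chebU_add_mul_chebU, Nat.add_sub_cancel' h]

theorem integral_mul_sqrt_one_sub_sq (f : ℝ → ℝ) :
    ∫ y in (-1:ℝ)..1, f y * √(1 - y ^ 2) = ∫ θ in 0..π, f (cos θ) * sin θ ^ 2 := by
  calc ∫ y in (-1:ℝ)..1, f y * √(1 - y ^ 2)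
      = ∫ y in (-1:ℝ)..1, f y * (1 - y ^ 2) * √(1 - y ^ 2)⁻¹ := by
        refine integral_congr fun y _ => ?_
        rw [mul_assoc, sqrt_inv, ← div_eq_mul_inv, div_sqrt]
    _ = ∫ θ in 0..π, f (cos θ) * (1 - cos θ ^ 2) := by
        rw [← integral_measureT, integral_measureT_eq_integral_cos]
    _ = _ := by simp only [← sin_sq]

theorem integral_cos_int_mul_eq_zero {k : ℤ} (hk : k ≠ 0) (n : ℕ) :
    ∫ x in (0:ℝ)..n * π, cos (k * x) = 0 := by
  have hk' : (k : ℝ) ≠ 0 := Int.cast_ne_zero.mpr hk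
  rw [integral_comp_mul_left (f := cos) hk', integral_cos, mul_zero, sin_zero,
    ← mul_assoc, show (k : ℝ) * n = ((k * n : ℤ) : ℝ) by push_cast; ring, sin_int_mul_pi]
  simp

theorem integral_sin_mul_sin_eq_zero {a b : ℕ} (hab : a ≠ b) :
    ∫ θ in 0..π, sin (a * θ) * sin (b * θ) = 0 := by
  have product_to_sum (θ : ℝ) : sin (a * θ) * sin (b * θ)
      = (cos (((a - b : ℤ) : ℝ) * θ) - cos (((a + b : ℤ) : ℝ) * θ)) / 2 := by
    push_cast
    rw [sub_mul, add_mul, cos_sub, cos_add]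
    ring
  have hcos (k : ℤ) : IntervalIntegrable (fun θ => cos (k * θ)) volume 0 π := by
    apply Continuous.intervalIntegrable; fun_prop
  simp only [product_to_sum]
  have hπ : π = ((1 : ℕ) : ℝ) * π := by simp
  rw [intervalIntegral.integral_div, integral_sub (hcos _) (hcos _), hπ,
    integral_cos_int_mul_eq_zero (by omega), integral_cos_int_mul_eq_zero (by omega)]
  simp

theorem integral_chebU_mul_chebU_mul_sqrt_eq_zero {i j : ℕ} (hij : i ≠ j) :
    ∫ y in (-1:ℝ)..1, chebU i y * chebU j y * √(1 - y ^ 2) = 0 := by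
  calc ∫ y in (-1:ℝ)..1, chebU i y * chebU j y * √(1 - y ^ 2)
      = ∫ θ in 0..π, sin (((i + 1 : ℕ) : ℝ) * θ) * sin (((j + 1 : ℕ) : ℝ) * θ) := by
        rw [integral_mul_sqrt_one_sub_sq]
        refine integral_congr fun θ _ => ?_
        push_cast
        rw [← chebU_cos_mul_sin, ← chebU_cos_mul_sin]
        ring
    _ = 0 := integral_sin_mul_sin_eq_zero (by omega)

theorem Ccoef_eq_zero_of_add_add_lt {i j k m : ℕ} (h : i + j + k < m) : Ccoef i j k m = 0 := by
  have expand (y : ℝ) : chebU i y * chebU j y * chebU k y * chebU m y * √(1 - y ^ 2)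
      = ∑ s ∈ Finset.range (min i j + 1), ∑ t ∈ Finset.range (min k m + 1),
          chebU (max i j - min i j + 2 * s) y * chebU (max k m - min k m + 2 * t) y
            * √(1 - y ^ 2) := by
    rw [mul_assoc (chebU i y * chebU j y), chebU_mul_chebU i j, chebU_mul_chebU k m,
      Finset.sum_mul_sum, Finset.sum_mul]
    simp only [Finset.sum_mul]
  have hcont (a b : ℕ) : Continuous fun y => chebU a y * chebU b y * √(1 - y ^ 2) := by
    have := continuous_chebU a
    have := continuous_chebU b
    fun_prop
  rw [Ccoef, integral_congr fun y _ => expand y, integral_finsetSum fun s _ =>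
    (continuous_finsetSum _ fun t _ => hcont _ _).intervalIntegrable _ _]
  refine mul_eq_zero_of_right _ (Finset.sum_eq_zero fun s hs => ?_)
  rw [integral_finsetSum fun t _ => (hcont _ _).intervalIntegrable _ _]
  refine Finset.sum_eq_zero fun t _ => integral_chebU_mul_chebU_mul_sqrt_eq_zero ?_
  simp only [Finset.mem_range] at hs
  omega

theorem integral_cos_pow_three_mul_cos {p q : ℕ} (hp : p ≠ 0) :
    ∫ t in (0:ℝ)..2 * π, cos (p * t) ^ 3 * cos (q * t)
      = (if q = p then 3 * π / 4 else 0) + (if q = 3 * p then π / 4 else 0) := by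
  have product_to_sum (t : ℝ) : cos (p * t) ^ 3 * cos (q * t)
      = (cos (((3 * p + q : ℤ) : ℝ) * t) + cos (((3 * p - q : ℤ) : ℝ) * t)) / 8
        + 3 * (cos (((p + q : ℤ) : ℝ) * t) + cos (((p - q : ℤ) : ℝ) * t)) / 8 := by
    push_cast
    rw [add_mul, sub_mul, add_mul, sub_mul, cos_add, cos_sub, cos_add, cos_sub,
      mul_assoc 3, cos_three_mul]
    ring
  have hcos (k : ℤ) : IntervalIntegrable (fun t => cos (k * t)) volume 0 (2 * π) := by
    apply Continuous.intervalIntegrable; fun_prop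
  have integral_cos_int (k : ℤ) :
      ∫ t in (0:ℝ)..2 * π, cos (k * t) = if k = 0 then 2 * π else 0 := by
    split_ifs with hk
    · simp [hk]
    · simpa using integral_cos_int_mul_eq_zero hk 2
  simp only [product_to_sum]
  rw [intervalIntegral.integral_add ((hcos _).add (hcos _) |>.div_const _)
      (((hcos _).add (hcos _)).const_mul _ |>.div_const _),
    intervalIntegral.integral_div, intervalIntegral.integral_div,
    intervalIntegral.integral_const_mul, integral_add (hcos _) (hcos _),
    integral_add (hcos _) (hcos _), integral_cos_int, integral_cos_int, integral_cos_int,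
    integral_cos_int,
    if_neg (show 3 * (p : ℤ) + q ≠ 0 by omega), if_neg (show (p : ℤ) + q ≠ 0 by omega)]
  have h3p : 3 * (p : ℤ) - q = 0 ↔ q = 3 * p := by omega
  have hp' : (p : ℤ) - q = 0 ↔ q = p := by omega
  simp only [h3p, hp', zero_add]
  split_ifs <;> ring

theorem Kcw_pow_three_mul_Ccoef (γ : ℕ) :
    3 * (Kcw γ ^ 3 * Ccoef γ γ γ γ) = 8 * ((γ : ℝ) + 1) ^ 2 * Kcw γ := by
  rcases le_or_gt (Ccoef γ γ γ γ) 0 with hc | hc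
  · have hK : Kcw γ = 0 := by
      rw [Kcw, sqrt_eq_zero_of_nonpos (div_nonpos_of_nonneg_of_nonpos (by norm_num)
        (by linarith)), mul_zero]
    simp [hK]
  · have hK2 : Kcw γ ^ 2 = 8 * ((γ : ℝ) + 1) ^ 2 / (3 * Ccoef γ γ γ γ) := by
      rw [Kcw, mul_pow, mul_pow, sq_sqrt (by positivity)]
      ring
    calc 3 * (Kcw γ ^ 3 * Ccoef γ γ γ γ) = 3 * Ccoef γ γ γ γ * Kcw γ ^ 2 * Kcw γ := by ring
      _ = _ := by
        rw [hK2]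
        field_simp

/-- The rescaled one-mode initial data `ξ^m = K_γ·𝟙(m = γ)` is a zero of the resonant
operator of the spherically symmetric conformal cubic wave equation. -/
theorem one_mode_is_zero_of_resonant_operator (γ m : ℕ) :
    ((m:ℝ) + 1) ^ 2 * (if m = γ then Kcw γ else 0) -
      (Kcw γ) ^ 3 * Ccoef γ γ γ m *
        ((1 / (2 * Real.pi)) *
          ∫ t in (0:ℝ)..(2 * Real.pi),
            Real.cos (((γ:ℝ) + 1) * t) ^ 3 * Real.cos (((m:ℝ) + 1) * t)) = 0 := by
  have h := integral_cos_pow_three_mul_cos (p := γ + 1) (q := m + 1) (by omega)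
  push_cast at h
  rw [h]
  rcases eq_or_ne m γ with rfl | hne
  · have average : 1 / (2 * π) * (3 * π / 4 + 0) = 3 / 8 := by
      field_simp
      ring
    rw [if_pos rfl, if_pos rfl, if_neg (by omega), average]
    linear_combination (-1 / 8) * Kcw_pow_three_mul_Ccoef m
  · rw [if_neg hne, if_neg hne]
    by_cases h3 : m + 1 = 3 * (γ + 1)
    · rw [Ccoef_eq_zero_of_add_add_lt (by omega)]
      ring
    · rw [if_neg h3]
      ring
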